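/- The lattice A4 ⊕ A3 ⊕ A2 cannot be embedded in the lattice H ⊕ E8; that is, there is no 10 × 9 integer matrix M such that Mᵀ · G(H ⊕ E8) · M equals the Gram matrix of A4 ⊕ A3 ⊕ A2. -/

import Mathlib

/-!
Suppose `M` embeds `R = A₄ ⊕ A₃ ⊕ A₂` into the even unimodular lattice `L = H ⊕ E₈` of signature
`(1, 9)`. The orthogonal complement of `R` is spanned by a primitive vector `v`, and `d = v²` is
even (`L` is even) and positive (`R` is negative definite while `L` contains a positive vector).
Since `60 • R^* ⊆ R`, every `x ∈ L` satisfies `60 x = M a + ρ v` with `a = 60 A⁻¹ (Mᵀ G x)`.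
Taking `x = x₀` with `⟨v, x₀⟩ = 1`, pairing with `v` gives `ρ d = 60`, so `ρ` is a positive divisor
of `30`, and pairing with `x₀` gives `ρ ≡ -bᵀ (60 A⁻¹) b (mod 120)` with `b = Mᵀ G x₀`. That is
the discriminant form of `R`: modulo `8` only the `A₃` summand contributes and the value lies in
`{0, 4, 5}`, modulo `3` only the `A₂` summand contributes and the value is a square. No divisor of
`30` passes both tests.
-/

open Matrix

/-- Gram matrix of the ambient lattice (10 × 10). -/
def ambientGram : Matrix (Fin 10) (Fin 10) ℤ :=
  !![0, 1, 0, 0, 0, 0, 0, 0, 0, 0;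
      1, 0, 0, 0, 0, 0, 0, 0, 0, 0;
      0, 0, -2, 1, 0, 0, 0, 0, 0, 0;
      0, 0, 1, -2, 1, 0, 0, 0, 0, 0;
      0, 0, 0, 1, -2, 1, 0, 0, 0, 1;
      0, 0, 0, 0, 1, -2, 1, 0, 0, 0;
      0, 0, 0, 0, 0, 1, -2, 1, 0, 0;
      0, 0, 0, 0, 0, 0, 1, -2, 1, 0;
      0, 0, 0, 0, 0, 0, 0, 1, -2, 0;
      0, 0, 0, 0, 1, 0, 0, 0, 0, -2]

/-- Gram matrix of the root lattice to be embedded (9 × 9). -/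
def rootGram : Matrix (Fin 9) (Fin 9) ℤ :=
  !![-2, 1, 0, 0, 0, 0, 0, 0, 0;
      1, -2, 1, 0, 0, 0, 0, 0, 0;
      0, 1, -2, 1, 0, 0, 0, 0, 0;
      0, 0, 1, -2, 0, 0, 0, 0, 0;
      0, 0, 0, 0, -2, 1, 0, 0, 0;
      0, 0, 0, 0, 1, -2, 1, 0, 0;
      0, 0, 0, 0, 0, 1, -2, 0, 0;
      0, 0, 0, 0, 0, 0, 0, -2, 1;
      0, 0, 0, 0, 0, 0, 0, 1, -2]


lemma exists_ne_zero_mulVec_eq_zero {R : Type*} [CommRing R] [IsDomain R] {m : ℕ}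
    (N : Matrix (Fin m) (Fin (m + 1)) R) : ∃ w ≠ 0, N *ᵥ w = 0 := by
  obtain ⟨w, hw, hNw⟩ := exists_mulVec_eq_zero_iff.mpr
    (det_eq_zero_of_row_eq_zero (A := Matrix.of (Fin.cons 0 N)) 0 fun _ => rfl)
  exact ⟨w, hw, funext fun i => congrFun hNw i.succ⟩

lemma exists_eq_smul_and_dotProduct_eq_one {R : Type*} [CommRing R] [IsDomain R]
    [IsPrincipalIdealRing R] {ι : Type*} [Fintype ι] {w : ι → R} (hw : w ≠ 0) :
    ∃ (g : R) (v y : ι → R), w = g • v ∧ v ⬝ᵥ y = 1 := by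
  obtain ⟨g, hg⟩ := Submodule.IsPrincipal.principal (Ideal.span (Set.range w))
  have hmul (i : ι) : ∃ a, a • g = w i :=
    Submodule.mem_span_singleton.mp (hg ▸ Ideal.subset_span (Set.mem_range_self i))
  choose v hv using hmul
  obtain ⟨y, hy⟩ := Ideal.mem_span_range_iff_exists_fun.mp
    (hg ▸ Submodule.mem_span_singleton_self g : g ∈ Ideal.span (Set.range w))
  have hg0 : g ≠ 0 := by
    rintro rfl
    exact hw (funext fun i => by simp [← hv])
  refine ⟨g, v, y, funext fun i => by simp [← hv, mul_comm], mul_left_cancel₀ hg0 ?_⟩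
  conv_rhs => rw [mul_one, ← hy]
  simp only [dotProduct, Finset.mul_sum, ← hv, smul_eq_mul]
  exact Finset.sum_congr rfl fun i _ => by ring

lemma not_linearIndependent_of_mulVec_eq_zero {R : Type*} [CommRing R] [IsDomain R] {m : ℕ}
    (N : Matrix (Fin m) (Fin (m + 1)) R) (M : Matrix (Fin (m + 1)) (Fin m) R)
    (hNM : (N * M).det ≠ 0) {z z' : Fin (m + 1) → R} (hz : N *ᵥ z = 0) (hz' : N *ᵥ z' = 0) :
    ¬ LinearIndependent R ![z, z'] := by
  intro hli
  have hb : LinearIndependent R (Sum.elim (fun j => M *ᵥ Pi.single j 1) ![z, z']) := by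
    rw [Fintype.linearIndependent_iff]
    intro g hg
    simp only [Fintype.sum_sum_type, Sum.elim_inl, Sum.elim_inr, Fin.sum_univ_two,
      Matrix.cons_val_zero, Matrix.cons_val_one] at hg
    have hcol : ∑ j, g (Sum.inl j) • M *ᵥ Pi.single j 1 = M *ᵥ (g ∘ Sum.inl) := by
      simp only [← mulVec_smul, ← mulVec_sum]
      congr 1
      ext i
      simp [Finset.sum_apply, Pi.single_apply]
    rw [hcol] at hg
    have hc : g ∘ Sum.inl = 0 := by
      apply eq_zero_of_mulVec_eq_zero hNM
      have := congrArg (N *ᵥ ·) hg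
      simpa [mulVec_add, mulVec_smul, hz, hz', mulVec_mulVec] using this
    rw [hc, mulVec_zero, zero_add] at hg
    obtain ⟨h0, h1⟩ := LinearIndependent.pair_iff.mp hli _ _ hg
    rintro (j | j)
    · exact congrFun hc j
    · fin_cases j <;> assumption
  simpa using hb.fintype_card_le_finrank

lemma exists_ker_generator {R : Type*} [CommRing R] [IsDomain R] [IsPrincipalIdealRing R]
    {m : ℕ} (N : Matrix (Fin m) (Fin (m + 1)) R) (M : Matrix (Fin (m + 1)) (Fin m) R)
    (hNM : (N * M).det ≠ 0) :
    ∃ v y : Fin (m + 1) → R, N *ᵥ v = 0 ∧ v ⬝ᵥ y = 1 ∧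
      ∀ z, N *ᵥ z = 0 → z = (z ⬝ᵥ y) • v := by
  obtain ⟨w, hw, hNw⟩ := exists_ne_zero_mulVec_eq_zero N
  obtain ⟨g, v, y, rfl, hvy⟩ := exists_eq_smul_and_dotProduct_eq_one hw
  have hg : g ≠ 0 := by rintro rfl; exact hw (zero_smul _ _)
  have hNv : N *ᵥ v = 0 := by
    rw [mulVec_smul] at hNw
    exact (smul_eq_zero.mp hNw).resolve_left hg
  refine ⟨v, y, hNv, hvy, fun z hz => ?_⟩
  have hv : v ≠ 0 := by rintro rfl; simp at hvy
  have hdep := not_linearIndependent_of_mulVec_eq_zero N M hNM hz hNv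
  rw [LinearIndependent.pair_iff] at hdep
  push Not at hdep
  obtain ⟨s, t, hst, hne⟩ := hdep
  have hs : s ≠ 0 := by
    rintro rfl
    rw [zero_smul, zero_add] at hst
    exact hne rfl ((smul_eq_zero.mp hst).resolve_right hv)
  have hsz : s • z = -(t • v) := eq_neg_of_add_eq_zero_left hst
  have hdot : s * (z ⬝ᵥ y) = -t := by
    simpa [hvy] using congrArg (· ⬝ᵥ y) hsz
  apply smul_right_injective _ hs
  simp only [hsz, smul_smul, hdot, neg_smul]

lemma dotProduct_mulVec_transpose_mul {ι κ R : Type*} [Fintype ι] [Fintype κ] [CommRing R]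
    (M : Matrix ι κ R) (G : Matrix ι ι R) (a : κ → R) (y : ι → R) :
    (M *ᵥ a) ⬝ᵥ (G *ᵥ y) = a ⬝ᵥ ((Mᵀ * G) *ᵥ y) := by
  rw [dotProduct_mulVec, ← vecMul_transpose, vecMul_vecMul, ← dotProduct_mulVec]

lemma Matrix.IsSymm.dotProduct_mulVec_comm {ι R : Type*} [Fintype ι] [CommRing R]
    {G : Matrix ι ι R} (hG : G.IsSymm) (x y : ι → R) : x ⬝ᵥ (G *ᵥ y) = y ⬝ᵥ (G *ᵥ x) := by
  rw [dotProduct_mulVec, ← mulVec_transpose, hG.eq, dotProduct_comm]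

lemma dotProduct_add_transpose_mulVec_self {ι R : Type*} [Fintype ι] [CommRing R]
    (S : Matrix ι ι R) (x : ι → R) : x ⬝ᵥ ((S + Sᵀ) *ᵥ x) = 2 * (x ⬝ᵥ (S *ᵥ x)) := by
  rw [add_mulVec, dotProduct_add, mulVec_transpose, dotProduct_comm x (x ᵥ* S),
    ← dotProduct_mulVec]
  ring

def ambientGramInv : Matrix (Fin 10) (Fin 10) ℤ :=
  !![0, 1, 0, 0, 0, 0, 0, 0, 0, 0;
     1, 0, 0, 0, 0, 0, 0, 0, 0, 0;
     0, 0, -4, -7, -10, -8, -6, -4, -2, -5;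
     0, 0, -7, -14, -20, -16, -12, -8, -4, -10;
     0, 0, -10, -20, -30, -24, -18, -12, -6, -15;
     0, 0, -8, -16, -24, -20, -15, -10, -5, -12;
     0, 0, -6, -12, -18, -15, -12, -8, -4, -9;
     0, 0, -4, -8, -12, -10, -8, -6, -3, -6;
     0, 0, -2, -4, -6, -5, -4, -3, -2, -3;
     0, 0, -5, -10, -15, -12, -9, -6, -3, -8]

def ambientGramHalf : Matrix (Fin 10) (Fin 10) ℤ :=
  !![0, 1, 0, 0, 0, 0, 0, 0, 0, 0;
     0, 0, 0, 0, 0, 0, 0, 0, 0, 0;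
     0, 0, -1, 1, 0, 0, 0, 0, 0, 0;
     0, 0, 0, -1, 1, 0, 0, 0, 0, 0;
     0, 0, 0, 0, -1, 1, 0, 0, 0, 1;
     0, 0, 0, 0, 0, -1, 1, 0, 0, 0;
     0, 0, 0, 0, 0, 0, -1, 1, 0, 0;
     0, 0, 0, 0, 0, 0, 0, -1, 1, 0;
     0, 0, 0, 0, 0, 0, 0, 0, -1, 0;
     0, 0, 0, 0, 0, 0, 0, 0, 0, -1]

-- `60 • rootGram⁻¹`: the blocks are `12 • (5 A₄⁻¹)`, `15 • (4 A₃⁻¹)` and `20 • (3 A₂⁻¹)`.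
def rootGramScaledInv : Matrix (Fin 9) (Fin 9) ℤ :=
  !![-48, -36, -24, -12, 0, 0, 0, 0, 0;
     -36, -72, -48, -24, 0, 0, 0, 0, 0;
     -24, -48, -72, -36, 0, 0, 0, 0, 0;
     -12, -24, -36, -48, 0, 0, 0, 0, 0;
     0, 0, 0, 0, -45, -30, -15, 0, 0;
     0, 0, 0, 0, -30, -60, -30, 0, 0;
     0, 0, 0, 0, -15, -30, -45, 0, 0;
     0, 0, 0, 0, 0, 0, 0, -40, -20;
     0, 0, 0, 0, 0, 0, 0, -20, -40]

lemma ambientGram_mul_ambientGramInv : ambientGram * ambientGramInv = 1 := by decide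

lemma ambientGram_isSymm : ambientGram.IsSymm := by decide

lemma ambientGram_eq_half_add_transpose :
    ambientGram = ambientGramHalf + ambientGramHalfᵀ := by decide

lemma rootGram_mul_rootGramScaledInv : rootGram * rootGramScaledInv = (60 : ℤ) • 1 := by decide

lemma rootGram_det_ne_zero : rootGram.det ≠ 0 := by
  intro h
  have := congrArg det rootGram_mul_rootGramScaledInv
  rw [det_mul, h, zero_mul, det_smul, det_one] at this
  norm_num at this

lemma quadForm_rootGram_eq_neg_sum_sq (a : Fin 9 → ℤ) :
    a ⬝ᵥ (rootGram *ᵥ a) =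
      -(a 0 ^ 2 + (a 0 - a 1) ^ 2 + (a 1 - a 2) ^ 2 + (a 2 - a 3) ^ 2 + a 3 ^ 2
        + a 4 ^ 2 + (a 4 - a 5) ^ 2 + (a 5 - a 6) ^ 2 + a 6 ^ 2
        + a 7 ^ 2 + (a 7 - a 8) ^ 2 + a 8 ^ 2) := by
  simp [rootGram, dotProduct, mulVec, Fin.sum_univ_succ]
  ring

lemma neg_quadForm_rootGramScaledInv (b : Fin 9 → ℤ) :
    -(b ⬝ᵥ (rootGramScaledInv *ᵥ b)) =
      24 * (2 * b 0 ^ 2 + 3 * b 0 * b 1 + 2 * b 0 * b 2 + b 0 * b 3 + 3 * b 1 ^ 2 + 4 * b 1 * b 2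
        + 2 * b 1 * b 3 + 3 * b 2 ^ 2 + 3 * b 2 * b 3 + 2 * b 3 ^ 2)
      + 15 * (3 * b 4 ^ 2 + 4 * b 4 * b 5 + 2 * b 4 * b 6 + 4 * b 5 ^ 2 + 4 * b 5 * b 6
        + 3 * b 6 ^ 2)
      + 40 * (b 7 ^ 2 + b 7 * b 8 + b 8 ^ 2) := by
  simp [rootGramScaledInv, dotProduct, mulVec, Fin.sum_univ_succ]
  ring

lemma neg_quadForm_rootGramScaledInv_mod_eight (b : Fin 9 → ℤ) :
    ((-(b ⬝ᵥ (rootGramScaledInv *ᵥ b)) : ℤ) : ZMod 8) ∈ ({0, 4, 5} : Finset (ZMod 8)) := by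
  rw [neg_quadForm_rootGramScaledInv]
  push_cast
  reduce_mod_char
  generalize (b 4 : ZMod 8) = x, (b 5 : ZMod 8) = y, (b 6 : ZMod 8) = z
  revert x y z
  decide

lemma neg_quadForm_rootGramScaledInv_mod_three (b : Fin 9 → ℤ) :
    ((-(b ⬝ᵥ (rootGramScaledInv *ᵥ b)) : ℤ) : ZMod 3) ∈ ({0, 1} : Finset (ZMod 3)) := by
  rw [neg_quadForm_rootGramScaledInv]
  push_cast
  reduce_mod_char
  generalize (b 7 : ZMod 3) = x, (b 8 : ZMod 3) = y
  revert x y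
  decide

lemma sub_quadForm_rootGramScaledInv_not_dvd_thirty (k : ℤ) (b : Fin 9 → ℤ)
    (hpos : 0 < 120 * k - b ⬝ᵥ (rootGramScaledInv *ᵥ b)) :
    ¬ 120 * k - b ⬝ᵥ (rootGramScaledInv *ᵥ b) ∣ 30 := by
  have h8 : ((120 * k - b ⬝ᵥ (rootGramScaledInv *ᵥ b) : ℤ) : ZMod 8) ∈
      ({0, 4, 5} : Finset (ZMod 8)) := by
    convert neg_quadForm_rootGramScaledInv_mod_eight b using 1
    push_cast
    reduce_mod_char
  have h3 : ((120 * k - b ⬝ᵥ (rootGramScaledInv *ᵥ b) : ℤ) : ZMod 3) ∈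
      ({0, 1} : Finset (ZMod 3)) := by
    convert neg_quadForm_rootGramScaledInv_mod_three b using 1
    push_cast
    reduce_mod_char
  generalize 120 * k - b ⬝ᵥ (rootGramScaledInv *ᵥ b) = ρ at *
  intro h30
  have hle := Int.le_of_dvd (by norm_num) h30
  interval_cases ρ <;> revert h8 h3 h30 <;> decide

section Embedding

variable {M : Matrix (Fin 10) (Fin 9) ℤ}

lemma even_quadForm_ambientGram (x : Fin 10 → ℤ) : Even (x ⬝ᵥ (ambientGram *ᵥ x)) := by
  rw [ambientGram_eq_half_add_transpose, dotProduct_add_transpose_mulVec_self]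
  exact even_two_mul _

lemma exists_orthogonal_generator (hM : Mᵀ * ambientGram * M = rootGram) :
    ∃ v x₀ : Fin 10 → ℤ, (Mᵀ * ambientGram) *ᵥ v = 0 ∧ v ⬝ᵥ (ambientGram *ᵥ x₀) = 1 ∧
      ∀ x, ∃ ρ : ℤ,
        (60 : ℤ) • x = M *ᵥ (rootGramScaledInv *ᵥ ((Mᵀ * ambientGram) *ᵥ x)) + ρ • v := by
  obtain ⟨v, y, hv, hvy, hgen⟩ :=
    exists_ker_generator (Mᵀ * ambientGram) M (hM ▸ rootGram_det_ne_zero)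
  refine ⟨v, ambientGramInv *ᵥ y, hv, ?_, fun x => ?_⟩
  · rwa [mulVec_mulVec, ambientGram_mul_ambientGramInv, one_mulVec]
  set p := M *ᵥ (rootGramScaledInv *ᵥ ((Mᵀ * ambientGram) *ᵥ x))
  refine ⟨((60 : ℤ) • x - p) ⬝ᵥ y, ?_⟩
  rw [← hgen _ ?_, add_sub_cancel]
  rw [mulVec_sub, mulVec_mulVec, hM, mulVec_mulVec, rootGram_mul_rootGramScaledInv, smul_mulVec,
    one_mulVec, mulVec_smul, sub_self]

lemma quadForm_mulVec_add_smul (hM : Mᵀ * ambientGram * M = rootGram) {v : Fin 10 → ℤ}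
    (hv : (Mᵀ * ambientGram) *ᵥ v = 0) (a : Fin 9 → ℤ) (ρ : ℤ) :
    (M *ᵥ a + ρ • v) ⬝ᵥ (ambientGram *ᵥ (M *ᵥ a + ρ • v)) =
      a ⬝ᵥ (rootGram *ᵥ a) + ρ ^ 2 * (v ⬝ᵥ (ambientGram *ᵥ v)) := by
  have hMv : (M *ᵥ a) ⬝ᵥ (ambientGram *ᵥ v) = 0 := by
    rw [dotProduct_mulVec_transpose_mul, hv, dotProduct_zero]
  have hvM : v ⬝ᵥ (ambientGram *ᵥ (M *ᵥ a)) = 0 := by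
    rw [ambientGram_isSymm.dotProduct_mulVec_comm, hMv]
  rw [mulVec_add, mulVec_smul, dotProduct_add, add_dotProduct, add_dotProduct, dotProduct_smul,
    smul_dotProduct, smul_dotProduct, dotProduct_mulVec_transpose_mul, mulVec_mulVec, hM, hMv, hvM,
    dotProduct_smul]
  simp only [smul_eq_mul]
  ring

lemma quadForm_orthogonal_generator_pos (hM : Mᵀ * ambientGram * M = rootGram) {v : Fin 10 → ℤ}
    (hv : (Mᵀ * ambientGram) *ᵥ v = 0)
    (hdecomp : ∀ x, ∃ ρ : ℤ,
      (60 : ℤ) • x = M *ᵥ (rootGramScaledInv *ᵥ ((Mᵀ * ambientGram) *ᵥ x)) + ρ • v) :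
    0 < v ⬝ᵥ (ambientGram *ᵥ v) := by
  set u : Fin 10 → ℤ := ![1, 1, 0, 0, 0, 0, 0, 0, 0, 0]
  obtain ⟨ρ, hρ⟩ := hdecomp u
  have hu : ((60 : ℤ) • u) ⬝ᵥ (ambientGram *ᵥ ((60 : ℤ) • u)) = 7200 := by decide
  rw [hρ, quadForm_mulVec_add_smul hM hv, quadForm_rootGram_eq_neg_sum_sq] at hu
  nlinarith [sq_nonneg ρ]

end Embedding

theorem stmt_2 :
    ¬ ∃ M : Matrix (Fin 10) (Fin 9) ℤ,
      Mᵀ * ambientGram * M = rootGram := by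
  rintro ⟨M, hM⟩
  obtain ⟨v, x₀, hv, hvx₀, hdecomp⟩ := exists_orthogonal_generator hM
  obtain ⟨ρ, hρ⟩ := hdecomp x₀
  set b := (Mᵀ * ambientGram) *ᵥ x₀
  have hpair (y : Fin 10 → ℤ) : 60 * (x₀ ⬝ᵥ (ambientGram *ᵥ y)) =
      (rootGramScaledInv *ᵥ b) ⬝ᵥ ((Mᵀ * ambientGram) *ᵥ y) + ρ * (v ⬝ᵥ (ambientGram *ᵥ y)) := by
    rw [← smul_eq_mul, ← smul_dotProduct, hρ, add_dotProduct, smul_dotProduct,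
      dotProduct_mulVec_transpose_mul, smul_eq_mul]
  have hρd : ρ * (v ⬝ᵥ (ambientGram *ᵥ v)) = 60 := by
    have := hpair v
    rwa [hv, dotProduct_zero, zero_add, ambientGram_isSymm.dotProduct_mulVec_comm, hvx₀,
      mul_one, eq_comm] at this
  have hρx₀ : ρ = 60 * (x₀ ⬝ᵥ (ambientGram *ᵥ x₀)) - b ⬝ᵥ (rootGramScaledInv *ᵥ b) := by
    rw [hpair, hvx₀, dotProduct_comm]
    ring
  obtain ⟨e, he⟩ := even_quadForm_ambientGram v
  obtain ⟨k, hk⟩ := even_quadForm_ambientGram x₀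
  have hρ30 : ρ ∣ 30 := ⟨e, by rw [he] at hρd; linarith⟩
  have hρpos : 0 < ρ :=
    (pos_iff_pos_of_mul_pos (hρd ▸ by norm_num)).mpr
      (quadForm_orthogonal_generator_pos hM hv hdecomp)
  rw [hρx₀, hk, show 60 * (k + k) = 120 * k by ring] at hρ30 hρpos
  exact sub_quadForm_rootGramScaledInv_not_dvd_thirty k b hρpos hρ30
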